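/- arXiv:2604.25079 — 3 statements merged into one kernel-verified Lean document; each statement's English description precedes it below -/
import Mathlib

section
/- Let n ∈ ℕ, n−1 < α ≤ n, let I ⊆ ℝ be an open interval, f : I → (0,∞) smooth, β ∈ I, λ₂ ∈ ℝ, and g(x) = λ₂ √(f(x)) + f'(x)/2. Let ε ∈ ℝ and let h : I → I be smooth with ω_0(h(x)) = ω_0(x) + ε for all x ∈ I. Suppose u, v : I × (0,∞) → ℝ are continuously differentiable in x, for each x the Riemann–Liouville derivatives of order α of t ↦ u(x,t) and t ↦ v(x,t) exist, and (u,v) satisfies the time-fractional telegraph system ∂^α_t u = ∂_x v, ∂^α_t v = f(x) ∂_x u + g(x) u on I × (0,∞). Then the pair ũ(x,t) = √(f(h(x))/f(x)) · u(h(x), t), ṽ(x,t) = v(h(x), t) also satisfies the same system on I × (0,∞). -/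
open MeasureTheory Real Set

noncomputable section

/-- The Riemann–Liouville kernel: for `α = n` it is `h` itself; for `n - 1 < α < n`
it is the fractional integral of order `n - α` of `h`. -/
def rlKernel (n : ℕ) (α : ℝ) (h : ℝ → ℝ) : ℝ → ℝ :=
  if α = (n : ℝ) then h
  else fun t => (Real.Gamma ((n : ℝ) - α))⁻¹ *
    ∫ s in (0:ℝ)..t, h s * (t - s) ^ ((n : ℝ) - α - 1)

/-- The Riemann–Liouville fractional derivative of order `α` (with `n - 1 < α ≤ n`). -/
def rlDeriv (n : ℕ) (α : ℝ) (h : ℝ → ℝ) : ℝ → ℝ :=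
  iteratedDeriv n (rlKernel n α h)

/-- The Riemann–Liouville derivative of order `α` of `h` exists on `(0, ∞)`. -/
def HasRLDerivOn (n : ℕ) (α : ℝ) (h : ℝ → ℝ) : Prop :=
  ContDiffOn ℝ n (rlKernel n α h) (Set.Ioi 0)


/-- `iteratedDeriv` commutes with multiplication by a constant (over a field,
no differentiability needed). -/
lemma iteratedDeriv_const_mul'' (n : ℕ) (c : ℝ) (F : ℝ → ℝ) :
    iteratedDeriv n (fun t => c * F t) = fun t => c * iteratedDeriv n F t := by
  induction n with
  | zero => simp
  | succ n ih =>
    funext t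
    rw [iteratedDeriv_succ, iteratedDeriv_succ, ih]
    exact deriv_const_mul_field c

lemma rlDeriv_const_mul (n : ℕ) (α : ℝ) (c : ℝ) (F : ℝ → ℝ) (t : ℝ) :
    rlDeriv n α (fun s => c * F s) t = c * rlDeriv n α F t := by
  unfold rlDeriv rlKernel
  split_ifs with hc
  · rw [iteratedDeriv_const_mul'']
  · have hfun : (fun t => (Real.Gamma ((n:ℝ) - α))⁻¹ *
        ∫ s in (0:ℝ)..t, (c * F s) * (t - s) ^ ((n:ℝ) - α - 1))
        = fun t => c * ((Real.Gamma ((n:ℝ) - α))⁻¹ *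
            ∫ s in (0:ℝ)..t, F s * (t - s) ^ ((n:ℝ) - α - 1)) := by
      funext τ
      simp only [mul_assoc, intervalIntegral.integral_const_mul]
      ring
    rw [hfun, iteratedDeriv_const_mul'']

lemma algebra_key (a b p q lam U U' : ℝ) (ha : a ≠ 0) (hb : b ≠ 0) :
    b ^ 2 * U' + (lam * b + q / 2) * U
      = a ^ 2 * ((((q / (2 * b) * (b / a)) * a - b * (p / (2 * a))) / a ^ 2) * U
          + (b / a) * (U' * (b / a)))
        + (lam * a + p / 2) * ((b / a) * U) := by
  field_simp
  ring

/-- Finite (group) form of the symmetry `X₃` of the time-fractional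
telegraph system with `g = λ₂ √f + f'/2`: if `h` translates `ω₀` by `ε`, then
`(ũ, ṽ)(x,t) = (√(f(h x)/f x) · u(h x, t), v(h x, t))` is again a solution. -/
theorem fractional_telegraph_X3_symmetry
    (n : ℕ) (α : ℝ) (hn : (n : ℝ) - 1 < α) (hα : α ≤ n)
    (I : Set ℝ) (hI : IsOpen I) (hIc : I.OrdConnected)
    (f : ℝ → ℝ) (hfpos : ∀ x ∈ I, 0 < f x) (hfs : ContDiffOn ℝ (⊤ : ℕ∞) f I)
    (β : ℝ) (hβ : β ∈ I) (lam₂ : ℝ)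
    (ω : ℝ → ℝ) (hω : ∀ x, ω x = ∫ r in β..x, (Real.sqrt (f r))⁻¹)
    (g : ℝ → ℝ)
    (hg : ∀ x ∈ I, g x = lam₂ * Real.sqrt (f x) + deriv f x / 2)
    (ε : ℝ) (h : ℝ → ℝ) (hmap : Set.MapsTo h I I) (hhs : ContDiffOn ℝ (⊤ : ℕ∞) h I)
    (hhω : ∀ x ∈ I, ω (h x) = ω x + ε)
    (u v : ℝ → ℝ → ℝ)
    (huC1 : ∀ t ∈ Set.Ioi (0:ℝ), ContDiffOn ℝ 1 (fun x => u x t) I)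
    (hvC1 : ∀ t ∈ Set.Ioi (0:ℝ), ContDiffOn ℝ 1 (fun x => v x t) I)
    (huRL : ∀ x ∈ I, HasRLDerivOn n α (fun t => u x t))
    (hvRL : ∀ x ∈ I, HasRLDerivOn n α (fun t => v x t))
    (hsys : ∀ x ∈ I, ∀ t ∈ Set.Ioi (0:ℝ),
      rlDeriv n α (fun s => u x s) t = deriv (fun y => v y t) x ∧
      rlDeriv n α (fun s => v x s) t
        = f x * deriv (fun y => u y t) x + g x * u x t) :
    ∀ x ∈ I, ∀ t ∈ Set.Ioi (0:ℝ),
      rlDeriv n α (fun s => Real.sqrt (f (h x) / f x) * u (h x) s) t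
        = deriv (fun y => v (h y) t) x ∧
      rlDeriv n α (fun s => v (h x) s) t
        = f x * deriv (fun y => Real.sqrt (f (h y) / f y) * u (h y) t) x
          + g x * (Real.sqrt (f (h x) / f x) * u (h x) t) := by
  intro x hx t ht
  set y := h x with hy_def
  have hy : y ∈ I := hmap hx
  have hfx := hfpos x hx
  have hfy := hfpos y hy
  have hsx : 0 < Real.sqrt (f x) := Real.sqrt_pos.2 hfx
  have hsy : 0 < Real.sqrt (f y) := Real.sqrt_pos.2 hfy
  -- continuity of the integrand of ω
  have hGc : ContinuousOn (fun r => (Real.sqrt (f r))⁻¹) I :=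
    (hfs.continuousOn.sqrt).inv₀ (fun r hr => (Real.sqrt_pos.2 (hfpos r hr)).ne')
  -- derivative of ω on I
  have hωd : ∀ z ∈ I, HasDerivAt ω ((Real.sqrt (f z))⁻¹) z := by
    intro z hz
    have hiint : IntervalIntegrable (fun r => (Real.sqrt (f r))⁻¹) volume β z :=
      (hGc.mono (hIc.uIcc_subset hβ hz)).intervalIntegrable
    have hmeas : StronglyMeasurableAtFilter (fun r => (Real.sqrt (f r))⁻¹) (nhds z) :=
      hGc.stronglyMeasurableAtFilter hI z hz
    have hder := intervalIntegral.integral_hasDerivAt_right hiint hmeas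
      (hGc.continuousAt (hI.mem_nhds hz))
    have hωe : ω = fun w => ∫ r in β..w, (Real.sqrt (f r))⁻¹ := funext hω
    rw [hωe]
    exact hder
  -- differentiability of h at x
  have hhd : DifferentiableAt ℝ h x := (hhs.contDiffAt (hI.mem_nhds hx)).differentiableAt (by simp)
  have hcomp : HasDerivAt (fun w => ω (h w)) ((Real.sqrt (f y))⁻¹ * deriv h x) x :=
    (hωd y hy).comp x hhd.hasDerivAt
  have halt : HasDerivAt (fun w => ω (h w)) ((Real.sqrt (f x))⁻¹) x := by
    have h1 : HasDerivAt (fun w => ω w + ε) ((Real.sqrt (f x))⁻¹) x := (hωd x hx).add_const ε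
    refine h1.congr_of_eventuallyEq ?_
    filter_upwards [hI.mem_nhds hx] with w hw using hhω w hw
  have hkey : (Real.sqrt (f y))⁻¹ * deriv h x = (Real.sqrt (f x))⁻¹ := hcomp.unique halt
  have hderivh : deriv h x = Real.sqrt (f y) / Real.sqrt (f x) := by
    field_simp at hkey
    rw [eq_div_iff hsx.ne']
    linarith
  have hc_eq : Real.sqrt (f y / f x) = Real.sqrt (f y) / Real.sqrt (f x) :=
    Real.sqrt_div hfy.le (f x)
  have hh' : HasDerivAt h (Real.sqrt (f y / f x)) x := by
    rw [hc_eq, ← hderivh]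
    exact hhd.hasDerivAt
  have hvy : DifferentiableAt ℝ (fun z => v z t) y :=
    ((hvC1 t ht).differentiableOn one_ne_zero).differentiableAt (hI.mem_nhds hy)
  have huy : DifferentiableAt ℝ (fun z => u z t) y :=
    ((huC1 t ht).differentiableOn one_ne_zero).differentiableAt (hI.mem_nhds hy)
  constructor
  · -- first equation
    rw [rlDeriv_const_mul, (hsys y hy t ht).1]
    have hcomp2 : HasDerivAt (fun w => v (h w) t)
        (deriv (fun z => v z t) y * Real.sqrt (f y / f x)) x := by
      have := HasDerivAt.comp x hvy.hasDerivAt hh'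
      simpa [Function.comp_def] using this
    rw [hcomp2.deriv]
    ring
  · -- second equation
    rw [(hsys y hy t ht).2]
    -- derivative of √(f ·) at x and y
    have hfdx : HasDerivAt f (deriv f x) x :=
      ((hfs.contDiffAt (hI.mem_nhds hx)).differentiableAt (by simp)).hasDerivAt
    have hfdy : HasDerivAt f (deriv f y) y :=
      ((hfs.contDiffAt (hI.mem_nhds hy)).differentiableAt (by simp)).hasDerivAt
    have hsqx : HasDerivAt (fun w => Real.sqrt (f w))
        (deriv f x / (2 * Real.sqrt (f x))) x := by
      have := (Real.hasDerivAt_sqrt hfx.ne').comp x hfdx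
      simp only [Function.comp_def] at this
      rw [show deriv f x / (2 * Real.sqrt (f x)) = 1 / (2 * Real.sqrt (f x)) * deriv f x by ring]
      exact this
    have hsqy : HasDerivAt (fun w => Real.sqrt (f w))
        (deriv f y / (2 * Real.sqrt (f y))) y := by
      have := (Real.hasDerivAt_sqrt hfy.ne').comp y hfdy
      simp only [Function.comp_def] at this
      rw [show deriv f y / (2 * Real.sqrt (f y)) = 1 / (2 * Real.sqrt (f y)) * deriv f y by ring]
      exact this
    have hsqyh : HasDerivAt (fun w => Real.sqrt (f (h w)))
        (deriv f y / (2 * Real.sqrt (f y)) * Real.sqrt (f y / f x)) x := by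
      have := HasDerivAt.comp x hsqy hh'
      simpa [Function.comp_def] using this
    have hcd : HasDerivAt (fun w => Real.sqrt (f (h w)) / Real.sqrt (f w))
        ((deriv f y / (2 * Real.sqrt (f y)) * Real.sqrt (f y / f x) * Real.sqrt (f x)
          - Real.sqrt (f y) * (deriv f x / (2 * Real.sqrt (f x)))) / Real.sqrt (f x) ^ 2) x :=
      hsqyh.div hsqx hsx.ne'
    have hcd2 : HasDerivAt (fun w => Real.sqrt (f (h w) / f w))
        ((deriv f y / (2 * Real.sqrt (f y)) * Real.sqrt (f y / f x) * Real.sqrt (f x)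
          - Real.sqrt (f y) * (deriv f x / (2 * Real.sqrt (f x)))) / Real.sqrt (f x) ^ 2) x := by
      refine hcd.congr_of_eventuallyEq ?_
      filter_upwards [hI.mem_nhds hx] with w hw
      exact Real.sqrt_div (hfpos (h w) (hmap hw)).le (f w)
    have huh : HasDerivAt (fun w => u (h w) t)
        (deriv (fun z => u z t) y * Real.sqrt (f y / f x)) x := by
      have := HasDerivAt.comp x huy.hasDerivAt hh'
      simpa [Function.comp_def] using this
    have hprod : HasDerivAt (fun w => Real.sqrt (f (h w) / f w) * u (h w) t) _ x :=
      hcd2.mul huh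
    rw [hprod.deriv, hg x hx, hg y hy, hc_eq]
    have hfx2 : f x = Real.sqrt (f x) ^ 2 := (Real.sq_sqrt hfx.le).symm
    have hfy2 : f y = Real.sqrt (f y) ^ 2 := (Real.sq_sqrt hfy.le).symm
    set a := Real.sqrt (f x) with ha_def
    set b := Real.sqrt (f y) with hb_def
    rw [hfx2, hfy2]
    exact algebra_key a b (deriv f x) (deriv f y) lam₂ (u y t) (deriv (fun z => u z t) y)
      hsx.ne' hsy.ne'
end
end

section
/- Let α > 0, let I ⊆ ℝ be an open interval, f : I → (0,∞) smooth, β ∈ I, and ω_0(x) = ∫_β^x dr/√(f(r)). Define first-order differential operators acting on smooth functions F(x,t,u,v) on I × (0,∞) × ℝ × ℝ by: V₁F = −√(f(x)) ω_0(x) F_x − (t/α) F_t + (f'(x)/(2√(f(x)))) ω_0(x) u F_u; V₂F = −√(f(x)) F_x + (f'(x)/(2√(f(x)))) u F_u; V₃F = u F_u + v F_v; V₄F = (v/√(f(x))) F_u + √(f(x)) u F_v. Then for every smooth F: [V₁,V₂]F = V₂F, and [V₁,V₃]F = [V₁,V₄]F = [V₂,V₃]F = [V₂,V₄]F = [V₃,V₄]F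 = 0, where [A,B]F = A(BF) − B(AF). -/
open MeasureTheory Real Set

noncomputable section

/-- Functions of the four variables `(x, t, u, v)`. -/
abbrev Fn4 : Type := ℝ → ℝ → ℝ → ℝ → ℝ

/-- Partial derivative in `x`. -/
def DxOp (F : Fn4) : Fn4 := fun x t u v => deriv (fun x' => F x' t u v) x

/-- Partial derivative in `t`. -/
def DtOp (F : Fn4) : Fn4 := fun x t u v => deriv (fun t' => F x t' u v) t

/-- Partial derivative in `u`. -/
def DuOp (F : Fn4) : Fn4 := fun x t u v => deriv (fun u' => F x t u' v) u

/-- Partial derivative in `v`. -/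
def DvOp (F : Fn4) : Fn4 := fun x t u v => deriv (fun v' => F x t u v') v

/-- `V₁ = −√f ω₀ ∂ₓ − (t/α) ∂ₜ + (f'/(2√f)) ω₀ u ∂ᵤ`. -/
def V1op (α : ℝ) (f ω : ℝ → ℝ) (F : Fn4) : Fn4 := fun x t u v =>
  -(Real.sqrt (f x) * ω x) * DxOp F x t u v - t / α * DtOp F x t u v
    + deriv f x / (2 * Real.sqrt (f x)) * ω x * u * DuOp F x t u v

/-- `V₂ = −√f ∂ₓ + (f'/(2√f)) u ∂ᵤ`. -/
def V2op (f : ℝ → ℝ) (F : Fn4) : Fn4 := fun x t u v =>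
  -Real.sqrt (f x) * DxOp F x t u v
    + deriv f x / (2 * Real.sqrt (f x)) * u * DuOp F x t u v

/-- `V₃ = u ∂ᵤ + v ∂_v`. -/
def V3op (F : Fn4) : Fn4 := fun x t u v =>
  u * DuOp F x t u v + v * DvOp F x t u v

/-- `V₄ = (v/√f) ∂ᵤ + √f u ∂_v`. -/
def V4op (f : ℝ → ℝ) (F : Fn4) : Fn4 := fun x t u v =>
  v / Real.sqrt (f x) * DuOp F x t u v + Real.sqrt (f x) * u * DvOp F x t u v

set_option maxHeartbeats 4000000 in
/-- Table 1 of the paper. The vector fields `V₁, V₂, V₃, V₄`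
satisfy `[V₁,V₂] = V₂` and all other commutators vanish, so they span a Lie algebra
of type `A₂ ⊕ 2A₁`. -/
theorem commutator_table_A2_plus_2A1
    (α : ℝ) (hα : 0 < α)
    (I : Set ℝ) (hI : IsOpen I) (hIc : I.OrdConnected)
    (f : ℝ → ℝ) (hfpos : ∀ x ∈ I, 0 < f x) (hfs : ContDiffOn ℝ (⊤ : ℕ∞) f I)
    (β : ℝ) (hβ : β ∈ I)
    (ω : ℝ → ℝ) (hω : ∀ x, ω x = ∫ r in β..x, (Real.sqrt (f r))⁻¹)
    (F : Fn4)
    (hFs : ContDiffOn ℝ (⊤ : ℕ∞) (fun p : ℝ × ℝ × ℝ × ℝ => F p.1 p.2.1 p.2.2.1 p.2.2.2)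
      (I ×ˢ (Set.Ioi (0:ℝ) ×ˢ ((Set.univ : Set ℝ) ×ˢ (Set.univ : Set ℝ))))) :
    ∀ x ∈ I, ∀ t ∈ Set.Ioi (0:ℝ), ∀ u v : ℝ,
      V1op α f ω (V2op f F) x t u v - V2op f (V1op α f ω F) x t u v
        = V2op f F x t u v ∧
      V1op α f ω (V3op F) x t u v - V3op (V1op α f ω F) x t u v = 0 ∧
      V1op α f ω (V4op f F) x t u v - V4op f (V1op α f ω F) x t u v = 0 ∧
      V2op f (V3op F) x t u v - V3op (V2op f F) x t u v = 0 ∧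
      V2op f (V4op f F) x t u v - V4op f (V2op f F) x t u v = 0 ∧
      V3op (V4op f F) x t u v - V4op f (V3op F) x t u v = 0 := by
  intro x hx t ht u v
  have hαne : α ≠ 0 := ne_of_gt hα
  set G : ℝ × ℝ × ℝ × ℝ → ℝ := fun p : ℝ × ℝ × ℝ × ℝ => F p.1 p.2.1 p.2.2.1 p.2.2.2 with hGdef
  have hFs' : ContDiffOn ℝ (⊤ : ℕ∞) G
      (I ×ˢ (Set.Ioi (0:ℝ) ×ˢ ((Set.univ : Set ℝ) ×ˢ (Set.univ : Set ℝ)))) := hFs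
  have hUopen : IsOpen (I ×ˢ (Set.Ioi (0:ℝ) ×ˢ ((Set.univ : Set ℝ) ×ˢ (Set.univ : Set ℝ)))) :=
    hI.prod (isOpen_Ioi.prod (isOpen_univ.prod isOpen_univ))
  have hmem : ∀ (a b c d : ℝ), a ∈ I → b ∈ Set.Ioi (0:ℝ) →
      ((a,b,c,d) : ℝ×ℝ×ℝ×ℝ) ∈ (I ×ˢ (Set.Ioi (0:ℝ) ×ˢ ((Set.univ : Set ℝ) ×ˢ (Set.univ : Set ℝ)))) :=
    fun a b c d ha hb => ⟨ha, hb, trivial, trivial⟩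
  have hGfd : ∀ (a b c d : ℝ), a ∈ I → b ∈ Set.Ioi (0:ℝ) →
      HasFDerivAt G (fderiv ℝ G (a,b,c,d)) (a,b,c,d) := fun a b c d ha hb =>
    ((hFs'.differentiableOn (by simp)).differentiableAt
      (hUopen.mem_nhds (hmem a b c d ha hb))).hasFDerivAt
  have hF's : ContDiffOn ℝ 1 (fderiv ℝ G)
      (I ×ˢ (Set.Ioi (0:ℝ) ×ˢ ((Set.univ : Set ℝ) ×ˢ (Set.univ : Set ℝ)))) :=
    hFs'.fderiv_of_isOpen hUopen (WithTop.coe_le_coe.mpr le_top)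
  have hF'fd : HasFDerivAt (fderiv ℝ G) (fderiv ℝ (fderiv ℝ G) ((x,t,u,v) : ℝ×ℝ×ℝ×ℝ))
      ((x,t,u,v) : ℝ×ℝ×ℝ×ℝ) :=
    ((hF's.differentiableOn one_ne_zero).differentiableAt
      (hUopen.mem_nhds (hmem x t u v hx ht))).hasFDerivAt
  set B := fderiv ℝ (fderiv ℝ G) ((x,t,u,v) : ℝ×ℝ×ℝ×ℝ) with hBdef
  have hsym : ∀ w₁ w₂ : ℝ×ℝ×ℝ×ℝ, B w₁ w₂ = B w₂ w₁ := by
    intro w₁ w₂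
    exact second_derivative_symmetric_of_eventually
      (by filter_upwards [hUopen.eventually_mem (hmem x t u v hx ht)] with p hp
          exact ((hFs'.differentiableOn (by simp)).differentiableAt
            (hUopen.mem_nhds hp)).hasFDerivAt)
      hF'fd w₁ w₂
  -- first partials of F in terms of the Fréchet derivative of G
  have hDX : ∀ (a b c d : ℝ), a ∈ I → b ∈ Set.Ioi (0:ℝ) →
      DxOp F a b c d = fderiv ℝ G (a,b,c,d) (1,0,0,0) := by
    intro a b c d ha hb
    have hc : HasDerivAt (fun s : ℝ => ((s,b,c,d) : ℝ×ℝ×ℝ×ℝ)) ((1,0,0,0) : ℝ×ℝ×ℝ×ℝ) a :=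
      (hasDerivAt_id a).prodMk (hasDerivAt_const _ _)
    exact ((hGfd a b c d ha hb).comp_hasDerivAt a hc).deriv
  have hDT : ∀ (a b c d : ℝ), a ∈ I → b ∈ Set.Ioi (0:ℝ) →
      DtOp F a b c d = fderiv ℝ G (a,b,c,d) (0,1,0,0) := by
    intro a b c d ha hb
    have hc : HasDerivAt (fun s : ℝ => ((a,s,c,d) : ℝ×ℝ×ℝ×ℝ)) ((0,1,0,0) : ℝ×ℝ×ℝ×ℝ) b :=
      (hasDerivAt_const _ _).prodMk ((hasDerivAt_id b).prodMk (hasDerivAt_const _ _))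
    exact ((hGfd a b c d ha hb).comp_hasDerivAt b hc).deriv
  have hDU : ∀ (a b c d : ℝ), a ∈ I → b ∈ Set.Ioi (0:ℝ) →
      DuOp F a b c d = fderiv ℝ G (a,b,c,d) (0,0,1,0) := by
    intro a b c d ha hb
    have hc : HasDerivAt (fun s : ℝ => ((a,b,s,d) : ℝ×ℝ×ℝ×ℝ)) ((0,0,1,0) : ℝ×ℝ×ℝ×ℝ) c :=
      (hasDerivAt_const _ _).prodMk ((hasDerivAt_const _ _).prodMk
        ((hasDerivAt_id c).prodMk (hasDerivAt_const _ _)))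
    exact ((hGfd a b c d ha hb).comp_hasDerivAt c hc).deriv
  have hDV : ∀ (a b c d : ℝ), a ∈ I → b ∈ Set.Ioi (0:ℝ) →
      DvOp F a b c d = fderiv ℝ G (a,b,c,d) (0,0,0,1) := by
    intro a b c d ha hb
    have hc : HasDerivAt (fun s : ℝ => ((a,b,c,s) : ℝ×ℝ×ℝ×ℝ)) ((0,0,0,1) : ℝ×ℝ×ℝ×ℝ) d :=
      (hasDerivAt_const _ _).prodMk ((hasDerivAt_const _ _).prodMk
        ((hasDerivAt_const _ _).prodMk (hasDerivAt_id d)))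
    exact ((hGfd a b c d ha hb).comp_hasDerivAt d hc).deriv
  -- directional derivatives of the first partials (second derivatives of G)
  have hB_x : ∀ w : ℝ×ℝ×ℝ×ℝ, HasDerivAt (fun x' : ℝ => fderiv ℝ G ((x',t,u,v) : ℝ×ℝ×ℝ×ℝ) w)
      (B (1,0,0,0) w) x := by
    intro w
    have hc : HasDerivAt (fun s : ℝ => ((s,t,u,v) : ℝ×ℝ×ℝ×ℝ)) ((1,0,0,0) : ℝ×ℝ×ℝ×ℝ) x :=
      (hasDerivAt_id x).prodMk (hasDerivAt_const _ _)
    exact (((ContinuousLinearMap.apply ℝ ℝ w).hasFDerivAt.comp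
      ((x,t,u,v) : ℝ×ℝ×ℝ×ℝ) hF'fd).comp_hasDerivAt x hc)
  have hB_t : ∀ w : ℝ×ℝ×ℝ×ℝ, HasDerivAt (fun t' : ℝ => fderiv ℝ G ((x,t',u,v) : ℝ×ℝ×ℝ×ℝ) w)
      (B (0,1,0,0) w) t := by
    intro w
    have hc : HasDerivAt (fun s : ℝ => ((x,s,u,v) : ℝ×ℝ×ℝ×ℝ)) ((0,1,0,0) : ℝ×ℝ×ℝ×ℝ) t :=
      (hasDerivAt_const _ _).prodMk ((hasDerivAt_id t).prodMk (hasDerivAt_const _ _))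
    exact (((ContinuousLinearMap.apply ℝ ℝ w).hasFDerivAt.comp
      ((x,t,u,v) : ℝ×ℝ×ℝ×ℝ) hF'fd).comp_hasDerivAt t hc)
  have hB_u : ∀ w : ℝ×ℝ×ℝ×ℝ, HasDerivAt (fun u' : ℝ => fderiv ℝ G ((x,t,u',v) : ℝ×ℝ×ℝ×ℝ) w)
      (B (0,0,1,0) w) u := by
    intro w
    have hc : HasDerivAt (fun s : ℝ => ((x,t,s,v) : ℝ×ℝ×ℝ×ℝ)) ((0,0,1,0) : ℝ×ℝ×ℝ×ℝ) u :=
      (hasDerivAt_const _ _).prodMk ((hasDerivAt_const _ _).prodMk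
        ((hasDerivAt_id u).prodMk (hasDerivAt_const _ _)))
    exact (((ContinuousLinearMap.apply ℝ ℝ w).hasFDerivAt.comp
      ((x,t,u,v) : ℝ×ℝ×ℝ×ℝ) hF'fd).comp_hasDerivAt u hc)
  have hB_v : ∀ w : ℝ×ℝ×ℝ×ℝ, HasDerivAt (fun v' : ℝ => fderiv ℝ G ((x,t,u,v') : ℝ×ℝ×ℝ×ℝ) w)
      (B (0,0,0,1) w) v := by
    intro w
    have hc : HasDerivAt (fun s : ℝ => ((x,t,u,s) : ℝ×ℝ×ℝ×ℝ)) ((0,0,0,1) : ℝ×ℝ×ℝ×ℝ) v :=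
      (hasDerivAt_const _ _).prodMk ((hasDerivAt_const _ _).prodMk
        ((hasDerivAt_const _ _).prodMk (hasDerivAt_id v)))
    exact (((ContinuousLinearMap.apply ℝ ℝ w).hasFDerivAt.comp
      ((x,t,u,v) : ℝ×ℝ×ℝ×ℝ) hF'fd).comp_hasDerivAt v hc)
  -- derivatives of the coefficient functions at x
  have hs0pos : 0 < Real.sqrt (f x) := Real.sqrt_pos.mpr (hfpos x hx)
  have hs0ne : Real.sqrt (f x) ≠ 0 := ne_of_gt hs0pos
  have hfd : HasDerivAt f (deriv f x) x :=
    ((hfs.differentiableOn (by simp)).differentiableAt (hI.mem_nhds hx)).hasDerivAt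
  have hsqd : HasDerivAt (fun y => Real.sqrt (f y)) (deriv f x / (2 * Real.sqrt (f x))) x :=
    hfd.sqrt (hfpos x hx).ne'
  have hsqcont : ContinuousOn (fun r => (Real.sqrt (f r))⁻¹) I :=
    (hfs.continuousOn.sqrt).inv₀ fun r hr => (Real.sqrt_pos.mpr (hfpos r hr)).ne'
  have hωd : HasDerivAt ω (Real.sqrt (f x))⁻¹ x := by
    have hInt : IntervalIntegrable (fun r => (Real.sqrt (f r))⁻¹) MeasureTheory.volume β x :=
      (hsqcont.mono (hIc.uIcc_subset hβ hx)).intervalIntegrable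
    have hMeas : StronglyMeasurableAtFilter (fun r => (Real.sqrt (f r))⁻¹) (nhds x)
        MeasureTheory.volume := hsqcont.stronglyMeasurableAtFilter hI x hx
    have hca : ContinuousAt (fun r => (Real.sqrt (f r))⁻¹) x :=
      hsqcont.continuousAt (hI.mem_nhds hx)
    have h := intervalIntegral.integral_hasDerivAt_right hInt hMeas hca
    have he : ω = fun y => ∫ r in β..y, (Real.sqrt (f r))⁻¹ := funext hω
    rw [he]; exact h
  have hdf1 : ContDiffOn ℝ 1 (deriv f) I := hfs.deriv_of_isOpen hI (WithTop.coe_le_coe.mpr le_top)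
  have hdfd : DifferentiableAt ℝ (deriv f) x :=
    (hdf1.differentiableOn one_ne_zero).differentiableAt (hI.mem_nhds hx)
  have hqd := hdfd.hasDerivAt.div ((hasDerivAt_const x (2:ℝ)).mul hsqd)
    (mul_ne_zero two_ne_zero hs0ne)
  -- representation lemmas
  have hV1rep : ∀ a ∈ I, ∀ b ∈ Set.Ioi (0:ℝ), ∀ c d : ℝ,
      V1op α f ω F a b c d
        = -(Real.sqrt (f a) * ω a) * fderiv ℝ G (a,b,c,d) (1,0,0,0)
          - b / α * fderiv ℝ G (a,b,c,d) (0,1,0,0)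
          + deriv f a / (2 * Real.sqrt (f a)) * ω a * c * fderiv ℝ G (a,b,c,d) (0,0,1,0) := by
    intro a ha b hb c d
    rw [V1op, hDX a b c d ha hb, hDT a b c d ha hb, hDU a b c d ha hb]
  have hV2rep : ∀ a ∈ I, ∀ b ∈ Set.Ioi (0:ℝ), ∀ c d : ℝ,
      V2op f F a b c d
        = -Real.sqrt (f a) * fderiv ℝ G (a,b,c,d) (1,0,0,0)
          + deriv f a / (2 * Real.sqrt (f a)) * c * fderiv ℝ G (a,b,c,d) (0,0,1,0) := by
    intro a ha b hb c d
    rw [V2op, hDX a b c d ha hb, hDU a b c d ha hb]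
  have hV3rep : ∀ a ∈ I, ∀ b ∈ Set.Ioi (0:ℝ), ∀ c d : ℝ,
      V3op F a b c d
        = c * fderiv ℝ G (a,b,c,d) (0,0,1,0) + d * fderiv ℝ G (a,b,c,d) (0,0,0,1) := by
    intro a ha b hb c d
    rw [V3op, hDU a b c d ha hb, hDV a b c d ha hb]
  have hV4rep : ∀ a ∈ I, ∀ b ∈ Set.Ioi (0:ℝ), ∀ c d : ℝ,
      V4op f F a b c d
        = d / Real.sqrt (f a) * fderiv ℝ G (a,b,c,d) (0,0,1,0)
          + Real.sqrt (f a) * c * fderiv ℝ G (a,b,c,d) (0,0,0,1) := by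
    intro a ha b hb c d
    rw [V4op, hDU a b c d ha hb, hDV a b c d ha hb]
  -- slice derivatives of V1op F
  have e1x : (fun x' => V1op α f ω F x' t u v) =ᶠ[nhds x]
      (fun x' => -(Real.sqrt (f x') * ω x') * fderiv ℝ G (x',t,u,v) (1,0,0,0)
        - t / α * fderiv ℝ G (x',t,u,v) (0,1,0,0)
        + deriv f x' / (2 * Real.sqrt (f x')) * ω x' * u * fderiv ℝ G (x',t,u,v) (0,0,1,0)) := by
    filter_upwards [hI.eventually_mem hx] with y hy
    exact hV1rep y hy t ht u v
  have hW1x := (((((hsqd.mul hωd).neg.mul (hB_x (1,0,0,0))).sub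
      ((hasDerivAt_const x (t/α)).mul (hB_x (0,1,0,0)))).add
      (((hqd.mul hωd).mul_const u).mul (hB_x (0,0,1,0)))).congr_of_eventuallyEq e1x).deriv
  have e1u : (fun u' => V1op α f ω F x t u' v) =ᶠ[nhds u]
      (fun u' => -(Real.sqrt (f x) * ω x) * fderiv ℝ G (x,t,u',v) (1,0,0,0)
        - t / α * fderiv ℝ G (x,t,u',v) (0,1,0,0)
        + deriv f x / (2 * Real.sqrt (f x)) * ω x * u' * fderiv ℝ G (x,t,u',v) (0,0,1,0)) :=
    Filter.Eventually.of_forall fun y => hV1rep x hx t ht y v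
  have hW1u := (((((hasDerivAt_const u (-(Real.sqrt (f x) * ω x))).mul (hB_u (1,0,0,0))).sub
      ((hasDerivAt_const u (t/α)).mul (hB_u (0,1,0,0)))).add
      (((hasDerivAt_const u (deriv f x / (2 * Real.sqrt (f x)) * ω x)).mul
        (hasDerivAt_id u)).mul (hB_u (0,0,1,0)))).congr_of_eventuallyEq e1u).deriv
  have e1v : (fun v' => V1op α f ω F x t u v') =ᶠ[nhds v]
      (fun v' => -(Real.sqrt (f x) * ω x) * fderiv ℝ G (x,t,u,v') (1,0,0,0)
        - t / α * fderiv ℝ G (x,t,u,v') (0,1,0,0)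
        + deriv f x / (2 * Real.sqrt (f x)) * ω x * u * fderiv ℝ G (x,t,u,v') (0,0,1,0)) :=
    Filter.Eventually.of_forall fun y => hV1rep x hx t ht u y
  have hW1v := (((((hasDerivAt_const v (-(Real.sqrt (f x) * ω x))).mul (hB_v (1,0,0,0))).sub
      ((hasDerivAt_const v (t/α)).mul (hB_v (0,1,0,0)))).add
      ((hasDerivAt_const v (deriv f x / (2 * Real.sqrt (f x)) * ω x * u)).mul
        (hB_v (0,0,1,0)))).congr_of_eventuallyEq e1v).deriv
  -- slice derivatives of V2op F
  have e2x : (fun x' => V2op f F x' t u v) =ᶠ[nhds x]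
      (fun x' => -Real.sqrt (f x') * fderiv ℝ G (x',t,u,v) (1,0,0,0)
        + deriv f x' / (2 * Real.sqrt (f x')) * u * fderiv ℝ G (x',t,u,v) (0,0,1,0)) := by
    filter_upwards [hI.eventually_mem hx] with y hy
    exact hV2rep y hy t ht u v
  have hW2x := (((hsqd.neg.mul (hB_x (1,0,0,0))).add
      ((hqd.mul_const u).mul (hB_x (0,0,1,0)))).congr_of_eventuallyEq e2x).deriv
  have e2t : (fun t' => V2op f F x t' u v) =ᶠ[nhds t]
      (fun t' => -Real.sqrt (f x) * fderiv ℝ G (x,t',u,v) (1,0,0,0)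
        + deriv f x / (2 * Real.sqrt (f x)) * u * fderiv ℝ G (x,t',u,v) (0,0,1,0)) := by
    filter_upwards [isOpen_Ioi.eventually_mem ht] with y hy
    exact hV2rep x hx y hy u v
  have hW2t := ((((hasDerivAt_const t (-Real.sqrt (f x))).mul (hB_t (1,0,0,0))).add
      ((hasDerivAt_const t (deriv f x / (2 * Real.sqrt (f x)) * u)).mul
        (hB_t (0,0,1,0)))).congr_of_eventuallyEq e2t).deriv
  have e2u : (fun u' => V2op f F x t u' v) =ᶠ[nhds u]
      (fun u' => -Real.sqrt (f x) * fderiv ℝ G (x,t,u',v) (1,0,0,0)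
        + deriv f x / (2 * Real.sqrt (f x)) * u' * fderiv ℝ G (x,t,u',v) (0,0,1,0)) :=
    Filter.Eventually.of_forall fun y => hV2rep x hx t ht y v
  have hW2u := ((((hasDerivAt_const u (-Real.sqrt (f x))).mul (hB_u (1,0,0,0))).add
      (((hasDerivAt_const u (deriv f x / (2 * Real.sqrt (f x)))).mul
        (hasDerivAt_id u)).mul (hB_u (0,0,1,0)))).congr_of_eventuallyEq e2u).deriv
  have e2v : (fun v' => V2op f F x t u v') =ᶠ[nhds v]
      (fun v' => -Real.sqrt (f x) * fderiv ℝ G (x,t,u,v') (1,0,0,0)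
        + deriv f x / (2 * Real.sqrt (f x)) * u * fderiv ℝ G (x,t,u,v') (0,0,1,0)) :=
    Filter.Eventually.of_forall fun y => hV2rep x hx t ht u y
  have hW2v := ((((hasDerivAt_const v (-Real.sqrt (f x))).mul (hB_v (1,0,0,0))).add
      ((hasDerivAt_const v (deriv f x / (2 * Real.sqrt (f x)) * u)).mul
        (hB_v (0,0,1,0)))).congr_of_eventuallyEq e2v).deriv
  -- slice derivatives of V3op F
  have e3x : (fun x' => V3op F x' t u v) =ᶠ[nhds x]
      (fun x' => u * fderiv ℝ G (x',t,u,v) (0,0,1,0) + v * fderiv ℝ G (x',t,u,v) (0,0,0,1)) := by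
    filter_upwards [hI.eventually_mem hx] with y hy
    exact hV3rep y hy t ht u v
  have hW3x := ((((hasDerivAt_const x u).mul (hB_x (0,0,1,0))).add
      ((hasDerivAt_const x v).mul (hB_x (0,0,0,1)))).congr_of_eventuallyEq e3x).deriv
  have e3t : (fun t' => V3op F x t' u v) =ᶠ[nhds t]
      (fun t' => u * fderiv ℝ G (x,t',u,v) (0,0,1,0) + v * fderiv ℝ G (x,t',u,v) (0,0,0,1)) := by
    filter_upwards [isOpen_Ioi.eventually_mem ht] with y hy
    exact hV3rep x hx y hy u v
  have hW3t := ((((hasDerivAt_const t u).mul (hB_t (0,0,1,0))).add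
      ((hasDerivAt_const t v).mul (hB_t (0,0,0,1)))).congr_of_eventuallyEq e3t).deriv
  have e3u : (fun u' => V3op F x t u' v) =ᶠ[nhds u]
      (fun u' => u' * fderiv ℝ G (x,t,u',v) (0,0,1,0) + v * fderiv ℝ G (x,t,u',v) (0,0,0,1)) :=
    Filter.Eventually.of_forall fun y => hV3rep x hx t ht y v
  have hW3u := ((((hasDerivAt_id u).mul (hB_u (0,0,1,0))).add
      ((hasDerivAt_const u v).mul (hB_u (0,0,0,1)))).congr_of_eventuallyEq e3u).deriv
  have e3v : (fun v' => V3op F x t u v') =ᶠ[nhds v]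
      (fun v' => u * fderiv ℝ G (x,t,u,v') (0,0,1,0) + v' * fderiv ℝ G (x,t,u,v') (0,0,0,1)) :=
    Filter.Eventually.of_forall fun y => hV3rep x hx t ht u y
  have hW3v := ((((hasDerivAt_const v u).mul (hB_v (0,0,1,0))).add
      ((hasDerivAt_id v).mul (hB_v (0,0,0,1)))).congr_of_eventuallyEq e3v).deriv
  -- slice derivatives of V4op F
  have e4x : (fun x' => V4op f F x' t u v) =ᶠ[nhds x]
      (fun x' => v / Real.sqrt (f x') * fderiv ℝ G (x',t,u,v) (0,0,1,0)
        + Real.sqrt (f x') * u * fderiv ℝ G (x',t,u,v) (0,0,0,1)) := by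
    filter_upwards [hI.eventually_mem hx] with y hy
    exact hV4rep y hy t ht u v
  have hW4x := (((((hasDerivAt_const x v).div hsqd hs0ne).mul (hB_x (0,0,1,0))).add
      ((hsqd.mul_const u).mul (hB_x (0,0,0,1)))).congr_of_eventuallyEq e4x).deriv
  have e4t : (fun t' => V4op f F x t' u v) =ᶠ[nhds t]
      (fun t' => v / Real.sqrt (f x) * fderiv ℝ G (x,t',u,v) (0,0,1,0)
        + Real.sqrt (f x) * u * fderiv ℝ G (x,t',u,v) (0,0,0,1)) := by
    filter_upwards [isOpen_Ioi.eventually_mem ht] with y hy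
    exact hV4rep x hx y hy u v
  have hW4t := ((((hasDerivAt_const t (v / Real.sqrt (f x))).mul (hB_t (0,0,1,0))).add
      ((hasDerivAt_const t (Real.sqrt (f x) * u)).mul
        (hB_t (0,0,0,1)))).congr_of_eventuallyEq e4t).deriv
  have e4u : (fun u' => V4op f F x t u' v) =ᶠ[nhds u]
      (fun u' => v / Real.sqrt (f x) * fderiv ℝ G (x,t,u',v) (0,0,1,0)
        + Real.sqrt (f x) * u' * fderiv ℝ G (x,t,u',v) (0,0,0,1)) :=
    Filter.Eventually.of_forall fun y => hV4rep x hx t ht y v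
  have hW4u := ((((hasDerivAt_const u (v / Real.sqrt (f x))).mul (hB_u (0,0,1,0))).add
      (((hasDerivAt_const u (Real.sqrt (f x))).mul (hasDerivAt_id u)).mul
        (hB_u (0,0,0,1)))).congr_of_eventuallyEq e4u).deriv
  have e4v : (fun v' => V4op f F x t u v') =ᶠ[nhds v]
      (fun v' => v' / Real.sqrt (f x) * fderiv ℝ G (x,t,u,v') (0,0,1,0)
        + Real.sqrt (f x) * u * fderiv ℝ G (x,t,u,v') (0,0,0,1)) :=
    Filter.Eventually.of_forall fun y => hV4rep x hx t ht u y
  have hW4v := (((((hasDerivAt_id v).div_const (Real.sqrt (f x))).mul (hB_v (0,0,1,0))).add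
      ((hasDerivAt_const v (Real.sqrt (f x) * u)).mul
        (hB_v (0,0,0,1)))).congr_of_eventuallyEq e4v).deriv
  -- symmetry of second derivatives
  have hsym21 : B (0,1,0,0) (1,0,0,0) = B (1,0,0,0) (0,1,0,0) := hsym _ _
  have hsym31 : B (0,0,1,0) (1,0,0,0) = B (1,0,0,0) (0,0,1,0) := hsym _ _
  have hsym41 : B (0,0,0,1) (1,0,0,0) = B (1,0,0,0) (0,0,0,1) := hsym _ _
  have hsym32 : B (0,0,1,0) (0,1,0,0) = B (0,1,0,0) (0,0,1,0) := hsym _ _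
  have hsym42 : B (0,0,0,1) (0,1,0,0) = B (0,1,0,0) (0,0,0,1) := hsym _ _
  have hsym43 : B (0,0,0,1) (0,0,1,0) = B (0,0,1,0) (0,0,0,1) := hsym _ _
  refine ⟨?_, ?_, ?_, ?_, ?_, ?_⟩
  · -- [V1, V2] = V2
    show (-(Real.sqrt (f x) * ω x) * deriv (fun x' => V2op f F x' t u v) x
        - t / α * deriv (fun t' => V2op f F x t' u v) t
        + deriv f x / (2 * Real.sqrt (f x)) * ω x * u * deriv (fun u' => V2op f F x t u' v) u)
      - (-Real.sqrt (f x) * deriv (fun x' => V1op α f ω F x' t u v) x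
        + deriv f x / (2 * Real.sqrt (f x)) * u * deriv (fun u' => V1op α f ω F x t u' v) u)
      = V2op f F x t u v
    rw [hW2x, hW2t, hW2u, hW1x, hW1u, hV2rep x hx t ht u v]
    simp only [hsym21, hsym31, hsym41, hsym32, hsym42, hsym43, Pi.mul_apply, Pi.div_apply, Pi.neg_apply, id_eq]
    field_simp
    ring
  · -- [V1, V3] = 0
    show (-(Real.sqrt (f x) * ω x) * deriv (fun x' => V3op F x' t u v) x
        - t / α * deriv (fun t' => V3op F x t' u v) t
        + deriv f x / (2 * Real.sqrt (f x)) * ω x * u * deriv (fun u' => V3op F x t u' v) u)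
      - (u * deriv (fun u' => V1op α f ω F x t u' v) u
        + v * deriv (fun v' => V1op α f ω F x t u v') v) = 0
    rw [hW3x, hW3t, hW3u, hW1u, hW1v]
    simp only [hsym21, hsym31, hsym41, hsym32, hsym42, hsym43, Pi.mul_apply, Pi.div_apply, Pi.neg_apply, id_eq]
    field_simp
    ring
  · -- [V1, V4] = 0
    show (-(Real.sqrt (f x) * ω x) * deriv (fun x' => V4op f F x' t u v) x
        - t / α * deriv (fun t' => V4op f F x t' u v) t
        + deriv f x / (2 * Real.sqrt (f x)) * ω x * u * deriv (fun u' => V4op f F x t u' v) u)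
      - (v / Real.sqrt (f x) * deriv (fun u' => V1op α f ω F x t u' v) u
        + Real.sqrt (f x) * u * deriv (fun v' => V1op α f ω F x t u v') v) = 0
    rw [hW4x, hW4t, hW4u, hW1u, hW1v]
    simp only [hsym21, hsym31, hsym41, hsym32, hsym42, hsym43, Pi.mul_apply, Pi.div_apply, Pi.neg_apply, id_eq]
    field_simp
    ring
  · -- [V2, V3] = 0
    show (-Real.sqrt (f x) * deriv (fun x' => V3op F x' t u v) x
        + deriv f x / (2 * Real.sqrt (f x)) * u * deriv (fun u' => V3op F x t u' v) u)
      - (u * deriv (fun u' => V2op f F x t u' v) u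
        + v * deriv (fun v' => V2op f F x t u v') v) = 0
    rw [hW3x, hW3u, hW2u, hW2v]
    simp only [hsym21, hsym31, hsym41, hsym32, hsym42, hsym43, Pi.mul_apply, Pi.div_apply, Pi.neg_apply, id_eq]
    field_simp
    ring
  · -- [V2, V4] = 0
    show (-Real.sqrt (f x) * deriv (fun x' => V4op f F x' t u v) x
        + deriv f x / (2 * Real.sqrt (f x)) * u * deriv (fun u' => V4op f F x t u' v) u)
      - (v / Real.sqrt (f x) * deriv (fun u' => V2op f F x t u' v) u
        + Real.sqrt (f x) * u * deriv (fun v' => V2op f F x t u v') v) = 0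
    rw [hW4x, hW4u, hW2u, hW2v]
    simp only [hsym21, hsym31, hsym41, hsym32, hsym42, hsym43, Pi.mul_apply, Pi.div_apply, Pi.neg_apply, id_eq]
    field_simp
    ring
  · -- [V3, V4] = 0
    show (u * deriv (fun u' => V4op f F x t u' v) u
        + v * deriv (fun v' => V4op f F x t u v') v)
      - (v / Real.sqrt (f x) * deriv (fun u' => V3op F x t u' v) u
        + Real.sqrt (f x) * u * deriv (fun v' => V3op F x t u v') v) = 0
    rw [hW4u, hW4v, hW3u, hW3v]
    simp only [hsym21, hsym31, hsym41, hsym32, hsym42, hsym43, Pi.mul_apply, Pi.div_apply, Pi.neg_apply, id_eq]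
    field_simp
    ring
end
end

section
/- Let n ∈ ℕ, n−1 < α ≤ n, a, λ₂ ∈ ℝ, set λ = a(a+λ₂), and let c_{k,1}, c_{k,2} ∈ ℝ for k = 1,…,n. Define for t > 0: φ(t) = Σ_{k=1}^n c_{k,1} t^{α−k} E_{2α,1+α−k}(λ t^{2α}) + a Σ_{k=1}^n c_{k,2} t^{2α−k} E_{2α,1+2α−k}(λ t^{2α}) and ψ(t) = (a+λ₂) Σ_{k=1}^n c_{k,1} t^{2α−k} E_{2α,1+2α−k}(λ t^{2α}) + Σ_{k=1}^n c_{k,2} t^{α−k} E_{2α,1+α−k}(λ t^{2α}). Then for all t > 0: (d^α/dt^α)φ(t) = a ψ(t) and (d^α/dt^α)ψ(t) = (a+λ₂) φ(t). -/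
open MeasureTheory Real Set

noncomputable section

/-- The two-parameter Mittag–Leffler function `E_{ρ,b}(z) = Σ_{j≥0} z^j / Γ(ρj + b)`,
with the convention that `1/Γ` vanishes at the poles of `Γ` (Mathlib's `Real.Gamma`
is `0` there). -/
def mittagLeffler (ρ b z : ℝ) : ℝ :=
  ∑' j : ℕ, z ^ j / Real.Gamma (ρ * j + b)

/-!
Put `scaledMittagLeffler ρ λ b t = t ^ (b - 1) E_{ρ,b}(λ t ^ ρ)`, the series
`∑ⱼ λ ^ j t ^ (ρ j + b - 1) / Γ(ρ j + b)`.
Both operations in the Riemann–Liouville derivative act on this series termwise: by the Beta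
integral, the fractional integral of order `μ` turns `b` into `b + μ` (for `b > 0`), and since
`(c - 1) / Γ(c) = 1 / Γ(c - 1)` each derivative turns `b` into `b - 1`; the interchanges are
justified by absolute convergence, which follows from `Γ(x) ≥ c ^ (x - 1) e ^ (-c)`. Hence
`d^α/dt^α` lowers `b` by `α`. For `b = 1 - k` with `k ≥ 1` the `j = 0` term vanishes, since `1/Γ`
vanishes at `1 - k`, and the remaining series is `λ` times the one with `b = 1 + ρ - k`. With
`ρ = 2α` the derivative therefore exchanges the two families of terms making up `φ` and `ψ`,
multiplying one of them by `λ = a (a + λ₂)`.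
-/

theorem inv_Gamma_eq_mul_inv_Gamma_add_one (s : ℝ) : (Gamma s)⁻¹ = s * (Gamma (s + 1))⁻¹ := by
  rcases ne_or_eq s 0 with hs | rfl
  · rw [Gamma_add_one hs, mul_inv, mul_inv_cancel_left₀ hs]
  · rw [Gamma_zero, inv_zero, zero_mul]

theorem rpow_mul_exp_neg_le_Gamma {c x : ℝ} (hc : 0 < c) (hx : 1 ≤ x) :
    c ^ (x - 1) * exp (-c) ≤ Gamma x := by
  have hx0 : 0 < x := one_pos.trans_le hx
  have hint := GammaIntegral_convergent hx0
  rw [Gamma_eq_integral hx0]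
  calc c ^ (x - 1) * exp (-c) = ∫ s in Ioi c, exp (-s) * c ^ (x - 1) := by
        rw [integral_mul_const, integral_exp_neg_Ioi, mul_comm]
    _ ≤ ∫ s in Ioi c, exp (-s) * s ^ (x - 1) := by
        refine setIntegral_mono_on ((integrableOn_exp_neg_Ioi c).mul_const _)
          (hint.mono_set (Ioi_subset_Ioi hc.le)) measurableSet_Ioi fun s hs => ?_
        gcongr
        exact le_of_lt hs
    _ ≤ ∫ s in Ioi 0, exp (-s) * s ^ (x - 1) := by
        refine setIntegral_mono_set hint ?_ (Ioi_subset_Ioi hc.le).eventuallyLE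
        filter_upwards [self_mem_ae_restrict measurableSet_Ioi] with s (hs : 0 < s)
        positivity

theorem rpow_mul_natCast_add {x : ℝ} (hx : 0 < x) (ρ d : ℝ) (j : ℕ) :
    x ^ (ρ * j + d) = (x ^ ρ) ^ j * x ^ d := by
  rw [rpow_add hx, ← rpow_natCast, ← rpow_mul hx.le, mul_comm ρ]

theorem summable_abs_mittagLeffler_series {ρ : ℝ} (hρ : 0 < ρ) (b z : ℝ) :
    Summable fun j : ℕ => |z ^ j / Gamma (ρ * j + b)| := by
  set r := |z|
  -- With `c ^ ρ = 2 r + 1`, the bound `Γ(ρ j + b) ≥ c ^ (ρ j + b - 1) e^{-c}` makes the terms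
  -- geometric with ratio `r / (2 r + 1)`.
  set c := (2 * r + 1) ^ ρ⁻¹
  have hc : 0 < c := by positivity
  have hcρ : c ^ ρ = 2 * r + 1 := by
    rw [← rpow_mul (by positivity), inv_mul_cancel₀ hρ.ne', rpow_one]
  have hq : r / (2 * r + 1) < 1 := by rw [div_lt_one (by positivity)]; linarith [abs_nonneg z]
  have hgeom : Summable fun j : ℕ => (r / (2 * r + 1)) ^ j * (exp c / c ^ (b - 1)) :=
    (summable_geometric_of_lt_one (by positivity) hq).mul_right _
  have hlarge : ∀ᶠ j : ℕ in Filter.atTop, 1 ≤ ρ * j + b :=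
    (Filter.tendsto_atTop_add_const_right _ b
      (tendsto_natCast_atTop_atTop.const_mul_atTop hρ)).eventually_ge_atTop 1
  refine hgeom.of_norm_bounded_eventually_nat (hlarge.mono fun j hj => ?_)
  have hlow := rpow_mul_exp_neg_le_Gamma hc hj
  have hpos : 0 < c ^ (ρ * j + b - 1) * exp (-c) := by positivity
  rw [norm_abs_eq_norm, norm_div, norm_pow, Real.norm_eq_abs,
    Real.norm_of_nonneg (hpos.le.trans hlow)]
  calc r ^ j / Gamma (ρ * j + b) ≤ r ^ j / (c ^ (ρ * j + b - 1) * exp (-c)) := by gcongr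
    _ = (r / (2 * r + 1)) ^ j * (exp c / c ^ (b - 1)) := by
        rw [add_sub_assoc, rpow_mul_natCast_add hc, hcρ, exp_neg, div_pow]
        field_simp

theorem rpow_le_max_rpow {l u x : ℝ} (hl : 0 < l) (hlx : l ≤ x) (hxu : x ≤ u) (e : ℝ) :
    x ^ e ≤ max (l ^ e) (u ^ e) := by
  rcases le_or_gt 0 e with he | he
  · exact le_max_of_le_right (rpow_le_rpow (hl.le.trans hlx) hxu he)
  · exact le_max_of_le_left (rpow_le_rpow_of_nonpos hl hlx he.le)

def mlTerm (ρ lam b : ℝ) (j : ℕ) (t : ℝ) : ℝ :=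
  lam ^ j * t ^ (ρ * j + b - 1) / Gamma (ρ * j + b)

def scaledMittagLeffler (ρ lam b t : ℝ) : ℝ :=
  ∑' j : ℕ, mlTerm ρ lam b j t

section mlTerm

variable {ρ lam b : ℝ}

theorem abs_mlTerm_le (hρ : 0 ≤ ρ) (j : ℕ) {x u : ℝ} (hx : 0 < x) (hxu : x ≤ u) :
    |mlTerm ρ lam b j x| ≤ x ^ (b - 1) * |(lam * u ^ ρ) ^ j / Gamma (ρ * j + b)| := by
  have hu : 0 < u := hx.trans_le hxu
  rw [mlTerm, add_sub_assoc, rpow_mul_natCast_add hx]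
  simp only [abs_div, abs_mul, abs_pow, abs_of_pos (rpow_pos_of_pos hx _),
    abs_of_pos (rpow_pos_of_pos hu _), mul_pow]
  have : (x ^ ρ) ^ j ≤ (u ^ ρ) ^ j := by gcongr
  calc |lam| ^ j * ((x ^ ρ) ^ j * x ^ (b - 1)) / |Gamma (ρ * j + b)|
      = x ^ (b - 1) * ((x ^ ρ) ^ j * (|lam| ^ j / |Gamma (ρ * j + b)|)) := by ring
    _ ≤ x ^ (b - 1) * ((u ^ ρ) ^ j * (|lam| ^ j / |Gamma (ρ * j + b)|)) := by gcongr
    _ = x ^ (b - 1) * (|lam| ^ j * (u ^ ρ) ^ j / |Gamma (ρ * j + b)|) := by ring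

theorem summable_abs_mlTerm (hρ : 0 < ρ) {t : ℝ} (ht : 0 < t) :
    Summable fun j => |mlTerm ρ lam b j t| :=
  .of_nonneg_of_le (fun _ => abs_nonneg _) (fun j => abs_mlTerm_le hρ.le j ht le_rfl)
    ((summable_abs_mittagLeffler_series hρ b _).mul_left _)

theorem summable_mlTerm (hρ : 0 < ρ) {t : ℝ} (ht : 0 < t) :
    Summable fun j => mlTerm ρ lam b j t :=
  (summable_abs_mlTerm hρ ht).of_abs

theorem hasDerivAt_mlTerm (j : ℕ) {x : ℝ} (hx : 0 < x) :
    HasDerivAt (mlTerm ρ lam b j) (mlTerm ρ lam (b - 1) j x) x := by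
  have h := ((hasDerivAt_rpow_const (p := ρ * j + b - 1) (Or.inl hx.ne')).const_mul
    (lam ^ j)).div_const (Gamma (ρ * j + b))
  refine h.congr_deriv ?_
  rw [mlTerm, div_eq_mul_inv, div_eq_mul_inv, show ρ * j + (b - 1) = ρ * j + b - 1 by ring,
    inv_Gamma_eq_mul_inv_Gamma_add_one (ρ * j + b - 1), sub_add_cancel]
  ring

end mlTerm

section scaledMittagLeffler

variable {ρ lam : ℝ}

theorem rpow_mul_mittagLeffler {b d t : ℝ} (hbd : b - 1 = d) (ht : 0 < t) :
    t ^ d * mittagLeffler ρ b (lam * t ^ ρ) = scaledMittagLeffler ρ lam b t := by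
  rw [mittagLeffler, scaledMittagLeffler, ← tsum_mul_left]
  refine tsum_congr fun j => ?_
  rw [mlTerm, add_sub_assoc, hbd, rpow_mul_natCast_add ht, mul_pow]
  ring

theorem hasDerivAt_scaledMittagLeffler (hρ : 0 < ρ) (b : ℝ) {t : ℝ} (ht : 0 < t) :
    HasDerivAt (scaledMittagLeffler ρ lam b) (scaledMittagLeffler ρ lam (b - 1) t) t := by
  set M := max ((t / 2) ^ (b - 2)) ((2 * t) ^ (b - 2))
  have hbound : ∀ (j : ℕ), ∀ x ∈ Ioo (t / 2) (2 * t),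
      ‖mlTerm ρ lam (b - 1) j x‖ ≤
        M * |(lam * (2 * t) ^ ρ) ^ j / Gamma (ρ * j + (b - 1))| := by
    intro j x hx
    have hx0 : 0 < x := by linarith [hx.1]
    refine (abs_mlTerm_le hρ.le j hx0 hx.2.le).trans (mul_le_mul_of_nonneg_right ?_ (abs_nonneg _))
    rw [show b - 1 - 1 = b - 2 by ring]
    exact rpow_le_max_rpow (by positivity) hx.1.le hx.2.le _
  exact hasDerivAt_tsum_of_isPreconnected
    ((summable_abs_mittagLeffler_series hρ _ _).mul_left M) isOpen_Ioo isPreconnected_Ioo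
    (fun j x hx => hasDerivAt_mlTerm j (by linarith [hx.1])) hbound
    (y₀ := t) ⟨by linarith, by linarith⟩ (summable_mlTerm hρ ht)
    ⟨by linarith, by linarith⟩

theorem scaledMittagLeffler_one_sub_natCast (hρ : 0 < ρ) {k : ℕ} (hk : 1 ≤ k) {t : ℝ}
    (ht : 0 < t) :
    scaledMittagLeffler ρ lam (1 - k) t = lam * scaledMittagLeffler ρ lam (1 + ρ - k) t := by
  have hpole : Gamma (ρ * (0 : ℕ) + (1 - k)) = 0 := by
    rw [show ρ * ((0 : ℕ) : ℝ) + (1 - k) = -((k - 1 : ℕ) : ℝ) by push_cast [hk]; ring,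
      Gamma_neg_nat_eq_zero]
  rw [scaledMittagLeffler, (summable_mlTerm hρ ht).tsum_eq_zero_add, mlTerm, hpole, div_zero,
    zero_add, scaledMittagLeffler, ← tsum_mul_left]
  refine tsum_congr fun j => ?_
  rw [mlTerm, mlTerm]
  push_cast
  ring_nf

section BetaKernel

variable {p q t : ℝ}

theorem intervalIntegrable_rpow_mul_rpow_sub (hp : 0 < p) (hq : 0 < q) (ht : 0 < t) :
    IntervalIntegrable (fun s => s ^ (p - 1) * (t - s) ^ (q - 1)) volume 0 t := by
  -- near `0` the second factor is bounded, near `t` the first one is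
  set A := max ((t / 2) ^ (q - 1)) (t ^ (q - 1))
  set B := max ((t / 2) ^ (p - 1)) (t ^ (p - 1))
  have hleft : IntervalIntegrable (fun s => s ^ (p - 1)) volume 0 t :=
    intervalIntegral.intervalIntegrable_rpow' (by linarith)
  have hright : IntervalIntegrable (fun s => (t - s) ^ (q - 1)) volume 0 t := by
    simpa using (intervalIntegral.intervalIntegrable_rpow' (a := 0) (b := t)
      (r := q - 1) (by linarith)).comp_sub_left t |>.symm
  refine ((hleft.const_mul A).add (hright.const_mul B)).mono_fun' (by fun_prop) ?_
  rw [Filter.EventuallyLE, uIoc_of_le ht.le, ae_restrict_iff' measurableSet_Ioc]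
  refine Filter.Eventually.of_forall fun s ⟨hs0, hst⟩ => ?_
  have hx : 0 ≤ s ^ (p - 1) := rpow_nonneg hs0.le _
  have hy : 0 ≤ (t - s) ^ (q - 1) := rpow_nonneg (by linarith) _
  have hA : 0 ≤ A := le_max_of_le_right (rpow_nonneg ht.le _)
  have hB : 0 ≤ B := le_max_of_le_right (rpow_nonneg ht.le _)
  rw [Real.norm_of_nonneg (mul_nonneg hx hy)]
  rcases le_total s (t / 2) with hs | hs
  · have : (t - s) ^ (q - 1) ≤ A :=
      rpow_le_max_rpow (by positivity) (by linarith) (by linarith) _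
    calc _ ≤ A * s ^ (p - 1) := by rw [mul_comm A]; exact mul_le_mul_of_nonneg_left this hx
      _ ≤ _ := le_add_of_nonneg_right (mul_nonneg hB hy)
  · have : s ^ (p - 1) ≤ B := rpow_le_max_rpow (by positivity) hs hst _
    calc _ ≤ B * (t - s) ^ (q - 1) := mul_le_mul_of_nonneg_right this hy
      _ ≤ _ := le_add_of_nonneg_left (mul_nonneg hA hx)

theorem integral_rpow_mul_rpow_sub (hp : 0 < p) (hq : 0 < q) (ht : 0 < t) :
    ∫ s in (0 : ℝ)..t, s ^ (p - 1) * (t - s) ^ (q - 1) =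
      Gamma p * Gamma q / Gamma (p + q) * t ^ (p + q - 1) := by
  apply Complex.ofReal_injective
  have hcpow : ∀ s ∈ uIcc 0 t, ((s ^ (p - 1) * (t - s) ^ (q - 1) : ℝ) : ℂ) =
      (s : ℂ) ^ ((p : ℂ) - 1) * ((t : ℂ) - s) ^ ((q : ℂ) - 1) := by
    intro s hs
    rw [uIcc_of_le ht.le] at hs
    push_cast [Complex.ofReal_cpow hs.1, Complex.ofReal_cpow (sub_nonneg.2 hs.2)]
    rfl
  rw [← intervalIntegral.integral_ofReal, intervalIntegral.integral_congr hcpow,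
    Complex.betaIntegral_scaled _ _ ht, Complex.betaIntegral_eq_Gamma_mul_div _ _ (by simpa)
    (by simpa)]
  push_cast [Complex.ofReal_cpow ht.le, ← Complex.Gamma_ofReal]
  ring

end BetaKernel

section FractionalIntegral

variable {ρ lam b μ t : ℝ}

theorem mlTerm_eq_mul_rpow (j : ℕ) (s : ℝ) :
    mlTerm ρ lam b j s = lam ^ j / Gamma (ρ * j + b) * s ^ (ρ * j + b - 1) := by
  rw [mlTerm]; ring

theorem abs_mlTerm {j : ℕ} {s : ℝ} (hb : 0 < ρ * j + b) (hs : 0 < s) :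
    |mlTerm ρ lam b j s| = mlTerm ρ |lam| b j s := by
  rw [mlTerm, mlTerm, abs_div, abs_mul, abs_pow, abs_of_pos (rpow_pos_of_pos hs _),
    abs_of_pos (Gamma_pos_of_pos hb)]

theorem intervalIntegrable_mlTerm_mul_rpow_sub {j : ℕ} (hb : 0 < ρ * j + b) (hμ : 0 < μ)
    (ht : 0 < t) :
    IntervalIntegrable (fun s => mlTerm ρ lam b j s * (t - s) ^ (μ - 1)) volume 0 t := by
  simpa only [mlTerm_eq_mul_rpow, mul_assoc] using
    (intervalIntegrable_rpow_mul_rpow_sub hb hμ ht).const_mul (lam ^ j / Gamma (ρ * j + b))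

theorem integral_mlTerm_mul_rpow_sub {j : ℕ} (hb : 0 < ρ * j + b) (hμ : 0 < μ) (ht : 0 < t) :
    ∫ s in (0 : ℝ)..t, mlTerm ρ lam b j s * (t - s) ^ (μ - 1) =
      Gamma μ * mlTerm ρ lam (b + μ) j t := by
  simp only [mlTerm_eq_mul_rpow, mul_assoc]
  rw [intervalIntegral.integral_const_mul, integral_rpow_mul_rpow_sub hb hμ ht,
    show ρ * j + b + μ = ρ * j + (b + μ) by ring]
  field_simp [(Gamma_pos_of_pos hb).ne']

theorem abs_scaledMittagLeffler_le (hρ : 0 < ρ) {s : ℝ} (hs : 0 < s) (hst : s ≤ t) :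
    |scaledMittagLeffler ρ lam b s| ≤
      s ^ (b - 1) * ∑' j : ℕ, |(lam * t ^ ρ) ^ j / Gamma (ρ * j + b)| :=
  calc |scaledMittagLeffler ρ lam b s| ≤ ∑' j, |mlTerm ρ lam b j s| := by
        simpa only [Real.norm_eq_abs, scaledMittagLeffler] using
          norm_tsum_le_tsum_norm (f := fun j => mlTerm ρ lam b j s) (summable_abs_mlTerm hρ hs)
    _ ≤ ∑' j : ℕ, s ^ (b - 1) * |(lam * t ^ ρ) ^ j / Gamma (ρ * j + b)| :=
        (summable_abs_mlTerm hρ hs).tsum_le_tsum (fun j => abs_mlTerm_le hρ.le j hs hst)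
          ((summable_abs_mittagLeffler_series hρ b _).mul_left _)
    _ = _ := tsum_mul_left

theorem intervalIntegrable_scaledMittagLeffler_mul_rpow_sub (hρ : 0 < ρ) (hb : 0 < b)
    (hμ : 0 < μ) (ht : 0 < t) :
    IntervalIntegrable (fun s => scaledMittagLeffler ρ lam b s * (t - s) ^ (μ - 1))
      volume 0 t := by
  set C := ∑' j : ℕ, |(lam * t ^ ρ) ^ j / Gamma (ρ * j + b)|
  have hcont : ContinuousOn (scaledMittagLeffler ρ lam b) (uIoc 0 t) := fun s hs =>
    (hasDerivAt_scaledMittagLeffler hρ b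
      (uIoc_of_le ht.le ▸ hs).1).continuousAt.continuousWithinAt
  refine ((intervalIntegrable_rpow_mul_rpow_sub hb hμ ht).const_mul C).mono_fun'
    ((hcont.aestronglyMeasurable measurableSet_uIoc).mul
      (by fun_prop : Measurable fun s : ℝ => (t - s) ^ (μ - 1)).aestronglyMeasurable) ?_
  rw [Filter.EventuallyLE, uIoc_of_le ht.le, ae_restrict_iff' measurableSet_Ioc]
  refine Filter.Eventually.of_forall fun s ⟨hs0, hst⟩ => ?_
  have hts : 0 ≤ (t - s) ^ (μ - 1) := rpow_nonneg (by linarith) _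
  rw [norm_mul, Real.norm_eq_abs, Real.norm_of_nonneg hts]
  calc _ ≤ s ^ (b - 1) * C * (t - s) ^ (μ - 1) :=
        mul_le_mul_of_nonneg_right (abs_scaledMittagLeffler_le hρ hs0 hst) hts
    _ = _ := by ring

theorem integral_scaledMittagLeffler_mul_rpow_sub (hρ : 0 < ρ) (hb : 0 < b) (hμ : 0 < μ)
    (ht : 0 < t) :
    ∫ s in (0 : ℝ)..t, scaledMittagLeffler ρ lam b s * (t - s) ^ (μ - 1) =
      Gamma μ * scaledMittagLeffler ρ lam (b + μ) t := by
  have hbj (j : ℕ) : 0 < ρ * j + b := by positivity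
  have hint (j : ℕ) := (intervalIntegrable_mlTerm_mul_rpow_sub (lam := lam) (hbj j) hμ ht).1
  have hnorm (j : ℕ) : ∫ s in Ioc 0 t, ‖mlTerm ρ lam b j s * (t - s) ^ (μ - 1)‖ =
      Gamma μ * mlTerm ρ |lam| (b + μ) j t := by
    rw [← integral_mlTerm_mul_rpow_sub (hbj j) hμ ht, intervalIntegral.integral_of_le ht.le]
    refine setIntegral_congr_fun measurableSet_Ioc fun s ⟨hs0, hst⟩ => ?_
    rw [norm_mul, Real.norm_eq_abs, abs_mlTerm (hbj j) hs0,
      Real.norm_of_nonneg (rpow_nonneg (by linarith) _)]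
  have hsum :
      Summable fun j => ∫ s in Ioc 0 t, ‖mlTerm ρ lam b j s * (t - s) ^ (μ - 1)‖ := by
    simpa only [hnorm] using (summable_mlTerm hρ ht).mul_left (Gamma μ)
  simp only [scaledMittagLeffler, ← tsum_mul_right]
  rw [intervalIntegral.integral_of_le ht.le, ← integral_tsum_of_summable_integral_norm hint hsum,
    ← tsum_mul_left]
  refine tsum_congr fun j => ?_
  rw [← intervalIntegral.integral_of_le ht.le, integral_mlTerm_mul_rpow_sub (hbj j) hμ ht]

end FractionalIntegral

section RiemannLiouville

variable {ι : Type*} {s : Finset ι} {w b : ι → ℝ} {ρ lam : ℝ}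

theorem iteratedDeriv_sum_scaledMittagLeffler (hρ : 0 < ρ) (m : ℕ) :
    EqOn (iteratedDeriv m fun x => ∑ i ∈ s, w i * scaledMittagLeffler ρ lam (b i) x)
      (fun x => ∑ i ∈ s, w i * scaledMittagLeffler ρ lam (b i - m) x) (Ioi 0) := by
  induction m with
  | zero => intro x _; simp
  | succ m ih =>
    intro x (hx : 0 < x)
    rw [iteratedDeriv_succ, (ih.eventuallyEq_of_mem (isOpen_Ioi.mem_nhds hx)).deriv_eq]
    refine (HasDerivAt.fun_sum fun i _ =>
      (hasDerivAt_scaledMittagLeffler hρ _ hx).const_mul (w i)).deriv.trans ?_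
    push_cast
    simp only [sub_sub]

theorem rlKernel_eqOn_sum_scaledMittagLeffler {n : ℕ} {α : ℝ} {h : ℝ → ℝ} (hρ : 0 < ρ)
    (hα : α ≤ n) (hb : ∀ i ∈ s, 0 < b i)
    (hh : EqOn h (fun x => ∑ i ∈ s, w i * scaledMittagLeffler ρ lam (b i) x) (Ioi 0)) :
    EqOn (rlKernel n α h)
      (fun x => ∑ i ∈ s, w i * scaledMittagLeffler ρ lam (b i + (n - α)) x) (Ioi 0) := by
  intro t (ht : 0 < t)
  rw [rlKernel]
  split_ifs with hαn
  · simpa [hαn] using hh ht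
  dsimp only
  have hμ : 0 < (n : ℝ) - α := sub_pos.2 (hα.lt_of_ne hαn)
  have hint (i : ι) (hi : i ∈ s) :=
    (intervalIntegrable_scaledMittagLeffler_mul_rpow_sub (lam := lam) hρ (hb i hi) hμ
      ht).const_mul (w i)
  have hintegrand : ∀ᵐ y, y ∈ uIoc 0 t → h y * (t - y) ^ ((n : ℝ) - α - 1) =
      ∑ i ∈ s, w i * (scaledMittagLeffler ρ lam (b i) y * (t - y) ^ ((n : ℝ) - α - 1)) := by
    refine Filter.Eventually.of_forall fun y hy => ?_
    rw [hh (uIoc_of_le ht.le ▸ hy).1, Finset.sum_mul]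
    simp only [mul_assoc]
  rw [intervalIntegral.integral_congr_ae hintegrand, intervalIntegral.integral_finsetSum hint,
    Finset.mul_sum]
  refine Finset.sum_congr rfl fun i hi => ?_
  rw [intervalIntegral.integral_const_mul,
    integral_scaledMittagLeffler_mul_rpow_sub hρ (hb i hi) hμ ht]
  field_simp [(Gamma_pos_of_pos hμ).ne']

theorem rlDeriv_sum_scaledMittagLeffler {n : ℕ} {α : ℝ} {h : ℝ → ℝ} (hρ : 0 < ρ)
    (hα : α ≤ n) (hb : ∀ i ∈ s, 0 < b i)
    (hh : EqOn h (fun x => ∑ i ∈ s, w i * scaledMittagLeffler ρ lam (b i) x) (Ioi 0))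
    {t : ℝ} (ht : 0 < t) :
    rlDeriv n α h t = ∑ i ∈ s, w i * scaledMittagLeffler ρ lam (b i - α) t := by
  rw [rlDeriv, ((rlKernel_eqOn_sum_scaledMittagLeffler hρ hα hb hh).iteratedDeriv_of_isOpen
    isOpen_Ioi n) ht, iteratedDeriv_sum_scaledMittagLeffler hρ n ht]
  simp only [add_sub_assoc, sub_sub_cancel_left, ← sub_eq_add_neg]

end RiemannLiouville

def mittagLefflerPair (n : ℕ) (α lam : ℝ) (e₁ e₂ : ℕ → ℝ) (t : ℝ) : ℝ :=
  ∑ k ∈ Finset.Icc 1 n,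
    (e₁ k * t ^ (α - k) * mittagLeffler (2 * α) (1 + α - k) (lam * t ^ (2 * α)) +
      e₂ k * t ^ (2 * α - k) * mittagLeffler (2 * α) (1 + 2 * α - k) (lam * t ^ (2 * α)))

section mittagLefflerPair

variable {n : ℕ} {α lam : ℝ}

theorem mittagLefflerPair_smul (r : ℝ) (e₁ e₂ : ℕ → ℝ) (t : ℝ) :
    mittagLefflerPair n α lam (r • e₁) (r • e₂) t =
      r * mittagLefflerPair n α lam e₁ e₂ t := by
  simp only [mittagLefflerPair, Finset.mul_sum, Pi.smul_apply, smul_eq_mul]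
  exact Finset.sum_congr rfl fun k _ => by ring

theorem mittagLefflerPair_eqOn_sum_scaledMittagLeffler (e₁ e₂ : ℕ → ℝ) :
    EqOn (mittagLefflerPair n α lam e₁ e₂)
      (fun x => ∑ i ∈ (Finset.Icc 1 n).disjSum (Finset.Icc 1 n), Sum.elim e₁ e₂ i *
        scaledMittagLeffler (2 * α) lam
          (Sum.elim (fun k : ℕ => 1 + α - k) (fun k : ℕ => 1 + 2 * α - k) i) x) (Ioi 0) := by
  intro x (hx : 0 < x)
  simp only [mittagLefflerPair, Finset.sum_disjSum, Sum.elim_inl, Sum.elim_inr,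
    Finset.sum_add_distrib]
  congr 1 <;> refine Finset.sum_congr rfl fun k _ => ?_ <;>
    rw [mul_assoc, rpow_mul_mittagLeffler (by ring) hx]

theorem rlDeriv_mittagLefflerPair (hn : (n : ℝ) - 1 < α) (hα : α ≤ n) (e₁ e₂ : ℕ → ℝ) {t : ℝ}
    (ht : 0 < t) :
    rlDeriv n α (mittagLefflerPair n α lam e₁ e₂) t =
      mittagLefflerPair n α lam e₂ (lam • e₁) t := by
  rcases n.eq_zero_or_pos with rfl | hn1
  · rw [rlDeriv, iteratedDeriv_zero, rlKernel]
    split_ifs <;> simp [mittagLefflerPair]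
  have hρ : 0 < 2 * α := by
    have : (1 : ℝ) ≤ n := by exact_mod_cast hn1
    linarith
  have hb : ∀ i ∈ (Finset.Icc 1 n).disjSum (Finset.Icc 1 n),
      0 < Sum.elim (fun k : ℕ => 1 + α - k) (fun k : ℕ => 1 + 2 * α - k) i := by
    rintro (k | k) hk <;>
    · have : (k : ℝ) ≤ n := by simp_all
      simp only [Sum.elim_inl, Sum.elim_inr]
      linarith
  rw [rlDeriv_sum_scaledMittagLeffler hρ hα hb
      (mittagLefflerPair_eqOn_sum_scaledMittagLeffler e₁ e₂) ht,
    mittagLefflerPair_eqOn_sum_scaledMittagLeffler e₂ (lam • e₁) ht]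
  simp only [Finset.sum_disjSum, Sum.elim_inl, Sum.elim_inr, Pi.smul_apply, smul_eq_mul]
  rw [add_comm]
  congr 1 <;> refine Finset.sum_congr rfl fun k hk => ?_
  · rw [show 1 + 2 * α - k - α = 1 + α - k by ring]
  · rw [show 1 + α - k - α = 1 - (k : ℝ) by ring,
      scaledMittagLeffler_one_sub_natCast hρ (Finset.mem_Icc.1 hk).1 ht]
    ring

end mittagLefflerPair

/-- The Mittag–Leffler pair `(φ, ψ)` solves the reduced system
`dᵅφ/dtᵅ = a ψ`, `dᵅψ/dtᵅ = (a + λ₂) φ` obtained from the subalgebra `W₃`. -/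
theorem mittagLeffler_solves_W3_reduced_system
    (n : ℕ) (α : ℝ) (hn : (n : ℝ) - 1 < α) (hα : α ≤ n)
    (a lam₂ : ℝ) (lam : ℝ) (hlam : lam = a * (a + lam₂))
    (c₁ c₂ : ℕ → ℝ) (φ ψ : ℝ → ℝ)
    (hφ : ∀ t, φ t =
      (∑ k ∈ Finset.Icc 1 n, c₁ k * t ^ (α - k) *
        mittagLeffler (2 * α) (1 + α - k) (lam * t ^ (2 * α)))
      + a * ∑ k ∈ Finset.Icc 1 n, c₂ k * t ^ (2 * α - k) *
        mittagLeffler (2 * α) (1 + 2 * α - k) (lam * t ^ (2 * α)))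
    (hψ : ∀ t, ψ t =
      (a + lam₂) * (∑ k ∈ Finset.Icc 1 n, c₁ k * t ^ (2 * α - k) *
        mittagLeffler (2 * α) (1 + 2 * α - k) (lam * t ^ (2 * α)))
      + ∑ k ∈ Finset.Icc 1 n, c₂ k * t ^ (α - k) *
        mittagLeffler (2 * α) (1 + α - k) (lam * t ^ (2 * α))) :
    ∀ t ∈ Set.Ioi (0:ℝ),
      rlDeriv n α φ t = a * ψ t ∧ rlDeriv n α ψ t = (a + lam₂) * φ t := by
  intro t ht
  have hφ' : φ = mittagLefflerPair n α lam c₁ (a • c₂) := funext fun x => by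
    simp only [hφ, mittagLefflerPair, Finset.sum_add_distrib, Finset.mul_sum, Pi.smul_apply,
      smul_eq_mul, mul_assoc]
  have hψ' : ψ = mittagLefflerPair n α lam c₂ ((a + lam₂) • c₁) := funext fun x => by
    simp only [hψ, mittagLefflerPair, Finset.sum_add_distrib, Finset.mul_sum, Pi.smul_apply,
      smul_eq_mul, mul_assoc, add_comm]
  have hlam₁ : lam • c₁ = a • (a + lam₂) • c₁ := by rw [smul_smul, hlam]
  have hlam₂ : lam • c₂ = (a + lam₂) • a • c₂ := by rw [smul_smul, hlam, mul_comm]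
  rw [hφ', hψ', rlDeriv_mittagLefflerPair hn hα _ _ ht, rlDeriv_mittagLefflerPair hn hα _ _ ht,
    hlam₁, hlam₂, mittagLefflerPair_smul, mittagLefflerPair_smul]
  exact ⟨rfl, rfl⟩
end scaledMittagLeffler
end
end
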